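/- arXiv:2412.14461 — 3 statements merged into one kernel-verified Lean document; each statement's English description precedes it below -/
import Mathlib

section
/- (Lemma 1, bias-aware decomposition.) Under symmetric label noise with error rate e and positive class masses, for every measurable LLM labeler ŷ : Ω → Fin K the reference agreement decomposes as A_R(ŷ) = a·A_T(ŷ) + b + J(ŷ), where a = (1−e) − e/(K−1), b = e/(K−1), A_T(ŷ) = μ({ŷ = y}) is the true agreement, A_R(ŷ) = μ({ŷ = r}) is the reference agreement, and J(ŷ) is the co-labeling covariance. -/
open MeasureTheory

/-- True agreement `A_T(ŷ) = μ({ŷ = y})`. -/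
noncomputable def trueAgree {Ω : Type*} [MeasurableSpace Ω] {K : ℕ}
    (μ : Measure Ω) (y yhat : Ω → Fin K) : ℝ :=
  (μ {ω | yhat ω = y ω}).toReal

/-- Reference agreement `A_R(ŷ) = μ({ŷ = r})`. -/
noncomputable def refAgree {Ω : Type*} [MeasurableSpace Ω] {K : ℕ}
    (μ : Measure Ω) (r yhat : Ω → Fin K) : ℝ :=
  (μ {ω | yhat ω = r ω}).toReal

/-- Co-labeling covariance
`J(ŷ) = ∑ₖ ∑ₗ [ μ({ŷ=ℓ}∩{r=ℓ}∩{y=k}) − μ({ŷ=ℓ}∩{y=k})·μ({r=ℓ}∩{y=k}) / μ({y=k}) ]`. -/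
noncomputable def coLabelCov {Ω : Type*} [MeasurableSpace Ω] {K : ℕ}
    (μ : Measure Ω) (y r yhat : Ω → Fin K) : ℝ :=
  ∑ k : Fin K, ∑ l : Fin K,
    ((μ ({ω | yhat ω = l} ∩ {ω | r ω = l} ∩ {ω | y ω = k})).toReal
      - (μ ({ω | yhat ω = l} ∩ {ω | y ω = k})).toReal
          * (μ ({ω | r ω = l} ∩ {ω | y ω = k})).toReal
          / (μ {ω | y ω = k}).toReal)

/-!
Splitting `{ŷ = r}` along the true class `y = k` and the predicted class `ŷ = ℓ` gives
`A_R = ∑ₖ ∑ₗ μ(ŷ = ℓ, r = ℓ, y = k)`, so `J = A_R − ∑ₖ ∑ₗ μ(ŷ = ℓ, y = k) μ(r = ℓ, y = k) / μ(y = k)`.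
Under symmetric noise `μ(r = ℓ, y = k) / μ(y = k)` is `1 − e` on the diagonal and `b = e/(K−1)`
off it, so the inner sum is `(1 − e) μ(ŷ = k, y = k) + b (μ(y = k) − μ(ŷ = k, y = k))`; summing
over `k` gives `(1 − e) A_T + b (1 − A_T) = a A_T + b`.
-/

open Finset

theorem sum_mul_div_eq_of_symmetric {ι : Type*} [Fintype ι] {p q : ι → ℝ} {m d c : ℝ}
    (k : ι) (hm : m ≠ 0) (hdiag : q k = d * m) (hoff : ∀ l ≠ k, q l = c * m) :
    ∑ l, p l * q l / m = d * p k + c * (∑ l, p l - p k) := by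
  classical
  have hterm : ∀ l, p l * q l / m = c * p l + if l = k then (d - c) * p k else 0 := by
    intro l
    split_ifs with hlk
    · subst hlk
      rw [hdiag]
      field_simp
      ring
    · rw [hoff l hlk]
      field_simp
      ring
  simp only [hterm, sum_add_distrib, ← mul_sum, sum_ite_eq', mem_univ, if_true]
  ring

section Partition

variable {Ω : Type*} [MeasurableSpace Ω] {μ : Measure Ω} [IsFiniteMeasure μ]

theorem measureReal_eq_sum_fiber_inter {α : Type*} [Fintype α] [MeasurableSpace α]
    [MeasurableSingletonClass α] {f : Ω → α} (hf : Measurable f) (s : Set Ω) :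
    μ.real s = ∑ a, μ.real ({ω | f ω = a} ∩ s) := by
  rw [← measureReal_restrict_apply_univ, ← Set.preimage_univ (f := f), ← coe_univ,
    ← sum_measureReal_preimage_singleton _ fun a _ => hf (measurableSet_singleton a)]
  exact sum_congr rfl fun a _ => measureReal_restrict_apply (hf (measurableSet_singleton a))

variable {K : ℕ} {y r yhat : Ω → Fin K}

theorem trueAgree_eq_sum (hy : Measurable y) :
    trueAgree μ y yhat = ∑ k, μ.real ({ω | yhat ω = k} ∩ {ω | y ω = k}) := by
  rw [trueAgree, ← measureReal_def, measureReal_eq_sum_fiber_inter hy]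
  refine sum_congr rfl fun k _ => congrArg μ.real ?_
  ext ω
  simp only [Set.mem_inter_iff, Set.mem_ofPred_eq]
  constructor
  · rintro ⟨hk, hyhat⟩
    exact ⟨hyhat.trans hk, hk⟩
  · rintro ⟨hyhat, hk⟩
    exact ⟨hk, hyhat.trans hk.symm⟩

theorem refAgree_eq_sum (hy : Measurable y) (hyhat : Measurable yhat) :
    refAgree μ r yhat
      = ∑ k, ∑ l, μ.real ({ω | yhat ω = l} ∩ {ω | r ω = l} ∩ {ω | y ω = k}) := by
  rw [refAgree, ← measureReal_def, measureReal_eq_sum_fiber_inter (hy.prodMk hyhat),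
    Fintype.sum_prod_type]
  refine sum_congr rfl fun k _ => sum_congr rfl fun l _ => congrArg μ.real ?_
  ext ω
  simp only [Set.mem_inter_iff, Set.mem_ofPred_eq, Prod.mk.injEq]
  constructor
  · rintro ⟨⟨hk, hl⟩, hr⟩
    exact ⟨⟨hl, hr.symm.trans hl⟩, hk⟩
  · rintro ⟨⟨hl, hr⟩, hk⟩
    exact ⟨⟨hk, hl⟩, hl.trans hr.symm⟩

theorem coLabelCov_eq_refAgree_sub (hy : Measurable y) (hyhat : Measurable yhat) :
    coLabelCov μ y r yhat = refAgree μ r yhat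
      - ∑ k, ∑ l, μ.real ({ω | yhat ω = l} ∩ {ω | y ω = k})
          * μ.real ({ω | r ω = l} ∩ {ω | y ω = k}) / μ.real {ω | y ω = k} := by
  simp only [coLabelCov, refAgree_eq_sum hy hyhat, ← sum_sub_distrib, measureReal_def]

end Partition

theorem bias_aware_decomposition_general
    {Ω : Type*} [MeasurableSpace Ω] {K : ℕ}
    (e : ℝ)
    (μ : Measure Ω) [IsProbabilityMeasure μ]
    (y r : Ω → Fin K) (hy : Measurable y)
    (hnoise_diag : ∀ k : Fin K,
      (μ ({ω | r ω = k} ∩ {ω | y ω = k})).toReal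
        = (1 - e) * (μ {ω | y ω = k}).toReal)
    (hnoise_off : ∀ k l : Fin K, l ≠ k →
      (μ ({ω | r ω = l} ∩ {ω | y ω = k})).toReal
        = e / ((K : ℝ) - 1) * (μ {ω | y ω = k}).toReal)
    (hpos : ∀ k : Fin K, 0 < μ {ω | y ω = k})
    (yhat : Ω → Fin K) (hyhat : Measurable yhat) :
    refAgree μ r yhat
      = ((1 - e) - e / ((K : ℝ) - 1)) * trueAgree μ y yhat
        + e / ((K : ℝ) - 1)
        + coLabelCov μ y r yhat := by
  have hcorr : ∀ k, ∑ l, μ.real ({ω | yhat ω = l} ∩ {ω | y ω = k})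
        * μ.real ({ω | r ω = l} ∩ {ω | y ω = k}) / μ.real {ω | y ω = k}
      = (1 - e) * μ.real ({ω | yhat ω = k} ∩ {ω | y ω = k})
        + e / ((K : ℝ) - 1) * (μ.real {ω | y ω = k}
          - μ.real ({ω | yhat ω = k} ∩ {ω | y ω = k})) := by
    intro k
    have hmass : μ.real {ω | y ω = k} ≠ 0 :=
      (measureReal_ne_zero_iff (measure_ne_top μ _)).2 (hpos k).ne'
    simp only [← measureReal_def] at hnoise_diag hnoise_off
    rw [sum_mul_div_eq_of_symmetric k hmass (hnoise_diag k) (hnoise_off k),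
      ← measureReal_eq_sum_fiber_inter hyhat]
  have htotal : ∑ k, μ.real {ω | y ω = k} = 1 := by
    simpa using (measureReal_eq_sum_fiber_inter (μ := μ) hy Set.univ).symm
  rw [coLabelCov_eq_refAgree_sub hy hyhat, trueAgree_eq_sum hy, sum_congr rfl fun k _ => hcorr k,
    sum_add_distrib, ← mul_sum, ← mul_sum, sum_sub_distrib, htotal]
  ring

/-- **Lemma 1, bias-aware decomposition.** Under symmetric label noise
with error rate `e ∈ [0,1)` and positive class masses, for every measurable labeler
`ŷ`, `A_R(ŷ) = a·A_T(ŷ) + b + J(ŷ)` with `a = (1−e) − e/(K−1)` and `b = e/(K−1)`. -/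
theorem bias_aware_decomposition
    {Ω : Type*} [MeasurableSpace Ω] {K : ℕ} (hK : 2 ≤ K)
    (e : ℝ) (he0 : 0 ≤ e) (he1 : e < 1)
    (μ : Measure Ω) [IsProbabilityMeasure μ]
    (y r : Ω → Fin K) (hy : Measurable y) (hr : Measurable r)
    (hnoise_diag : ∀ k : Fin K,
      (μ ({ω | r ω = k} ∩ {ω | y ω = k})).toReal
        = (1 - e) * (μ {ω | y ω = k}).toReal)
    (hnoise_off : ∀ k l : Fin K, l ≠ k →
      (μ ({ω | r ω = l} ∩ {ω | y ω = k})).toReal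
        = e / ((K : ℝ) - 1) * (μ {ω | y ω = k}).toReal)
    (hpos : ∀ k : Fin K, 0 < μ {ω | y ω = k})
    (yhat : Ω → Fin K) (hyhat : Measurable yhat) :
    refAgree μ r yhat
      = ((1 - e) - e / ((K : ℝ) - 1)) * trueAgree μ y yhat
        + e / ((K : ℝ) - 1)
        + coLabelCov μ y r yhat :=
  bias_aware_decomposition_general e μ y r hy hnoise_diag hnoise_off hpos yhat hyhat
end

section
/- (Per-class decomposition, intermediate step in the proof of Lemma 1.) Under symmetric label noise with error rate e and positive class masses, for every measurable LLM labeler ŷ : Ω → Fin K and every class k, μ({ŷ = r} ∩ {y = k}) = a·μ({ŷ = k} ∩ {y = k}) + b·μ({y = k}) + ∑_{ℓ} [ μ({ŷ = ℓ} ∩ {r = ℓ} ∩ {y = k}) − μ({ŷ = ℓ} ∩ {y = k})·μ({r = ℓ} ∩ {y = k}) / μ({y = k}) ], where a = (1−e) − e/(K−1) and b = e/(K−1). -/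
open MeasureTheory

/-- Measurement error `ε(ŷ) = 1 − A_T(ŷ)`. -/
noncomputable def measError {Ω : Type*} [MeasurableSpace Ω] {K : ℕ}
    (μ : Measure Ω) (y yhat : Ω → Fin K) : ℝ :=
  1 - trueAgree μ y yhat

/-!
Splitting `{ŷ = r} ∩ {y = k}` along the value `ℓ` of `ŷ` gives
`μ({ŷ = r} ∩ {y = k}) = ∑ₗ μ({ŷ = ℓ} ∩ {r = ℓ} ∩ {y = k})`. Symmetric noise says
`μ({r = ℓ} ∩ {y = k}) = cₗ · μ({y = k})` with `c_k = 1 - e` and `cₗ = b` for `ℓ ≠ k`, so the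
product term of the `ℓ`-th summand is `cₗ · μ({ŷ = ℓ} ∩ {y = k})`, and these add up to
`(c_k - b) · μ({ŷ = k} ∩ {y = k}) + b · μ({y = k})` because the sets `{ŷ = ℓ} ∩ {y = k}`
partition `{y = k}`.
-/

section LabelPartition

variable {Ω ι : Type*} [MeasurableSpace Ω] {μ : Measure Ω} [IsFiniteMeasure μ]
  [Fintype ι] [MeasurableSpace ι] [MeasurableSingletonClass ι]

theorem measureReal_eq_sum_inter_fiber {f : Ω → ι} (hf : Measurable f) {S : Set Ω}
    (hS : MeasurableSet S) : μ.real S = ∑ i, μ.real ({ω | f ω = i} ∩ S) := by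
  rw [← measureReal_iUnion_fintype]
  · congr 1
    ext ω
    simp
  · intro i j hij
    refine Disjoint.mono Set.inter_subset_left Set.inter_subset_left ?_
    exact Set.disjoint_left.2 fun ω hi hj => hij (hi.symm.trans hj)
  · exact fun i => (hf (measurableSet_singleton i)).inter hS

theorem measureReal_eq_inter_eq_sum [MeasurableEq ι] {f g : Ω → ι} (hf : Measurable f)
    (hg : Measurable g) {S : Set Ω} (hS : MeasurableSet S) :
    μ.real ({ω | f ω = g ω} ∩ S) = ∑ i, μ.real ({ω | f ω = i} ∩ {ω | g ω = i} ∩ S) := by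
  rw [measureReal_eq_sum_inter_fiber hf ((measurableSet_eq_fun hf hg).inter hS)]
  congr 1 with i
  congr 1
  ext ω
  simp only [Set.mem_inter_iff, Set.mem_ofPred_eq]
  grind

end LabelPartition

-- The inclusion `A ⊆ S` covers the case `μ S = 0`, where the division is junk but `μ A = 0`.
theorem measureReal_mul_div_of_eq_mul {Ω : Type*} [MeasurableSpace Ω] {μ : Measure Ω}
    [IsFiniteMeasure μ] {A B S : Set Ω} (hAS : A ⊆ S) {c : ℝ}
    (hB : μ.real B = c * μ.real S) : μ.real A * μ.real B / μ.real S = c * μ.real A := by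
  rcases eq_or_ne (μ.real S) 0 with hS | hS
  · simp [measureReal_mono_null hAS hS]
  · rw [hB]
    field_simp

theorem Finset.sum_ite_eq_mul {ι R : Type*} [Fintype ι] [DecidableEq ι] [CommRing R]
    (k : ι) (α β : R) (p : ι → R) :
    ∑ l, (if l = k then α else β) * p l = (α - β) * p k + β * ∑ l, p l := by
  have h : ∀ l, (if l = k then α else β) * p l = (if l = k then (α - β) * p l else 0) + β * p l :=
    fun l => by split_ifs <;> ring
  simp only [h, Finset.sum_add_distrib, Finset.sum_ite_eq', Finset.mem_univ, if_true,
    Finset.mul_sum]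

theorem per_class_decomposition_general
    {Ω : Type*} [MeasurableSpace Ω] {K : ℕ}
    (e : ℝ)
    (μ : Measure Ω) [IsProbabilityMeasure μ]
    (y r : Ω → Fin K) (hy : Measurable y) (hr : Measurable r)
    (hnoise_diag : ∀ k : Fin K,
      (μ ({ω | r ω = k} ∩ {ω | y ω = k})).toReal
        = (1 - e) * (μ {ω | y ω = k}).toReal)
    (hnoise_off : ∀ k l : Fin K, l ≠ k →
      (μ ({ω | r ω = l} ∩ {ω | y ω = k})).toReal
        = e / ((K : ℝ) - 1) * (μ {ω | y ω = k}).toReal)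
    (yhat : Ω → Fin K) (hyhat : Measurable yhat) (k : Fin K) :
    (μ ({ω | yhat ω = r ω} ∩ {ω | y ω = k})).toReal
      = ((1 - e) - e / ((K : ℝ) - 1))
          * (μ ({ω | yhat ω = k} ∩ {ω | y ω = k})).toReal
        + e / ((K : ℝ) - 1) * (μ {ω | y ω = k}).toReal
        + ∑ l : Fin K,
            ((μ ({ω | yhat ω = l} ∩ {ω | r ω = l} ∩ {ω | y ω = k})).toReal
              - (μ ({ω | yhat ω = l} ∩ {ω | y ω = k})).toReal
                  * (μ ({ω | r ω = l} ∩ {ω | y ω = k})).toReal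
                  / (μ {ω | y ω = k}).toReal) := by
  set b := e / ((K : ℝ) - 1)
  have hyk : MeasurableSet {ω | y ω = k} := hy (measurableSet_singleton k)
  have hnoise : ∀ l, μ.real ({ω | r ω = l} ∩ {ω | y ω = k})
      = (if l = k then 1 - e else b) * μ.real {ω | y ω = k} := by
    intro l
    split_ifs with hlk
    · subst hlk
      exact hnoise_diag l
    · exact hnoise_off k l hlk
  have hcov : ∀ l, μ.real ({ω | yhat ω = l} ∩ {ω | y ω = k})
      * μ.real ({ω | r ω = l} ∩ {ω | y ω = k}) / μ.real {ω | y ω = k}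
      = (if l = k then 1 - e else b) * μ.real ({ω | yhat ω = l} ∩ {ω | y ω = k}) :=
    fun l => measureReal_mul_div_of_eq_mul Set.inter_subset_right (hnoise l)
  simp only [← measureReal_def]
  rw [measureReal_eq_inter_eq_sum hyhat hr hyk]
  simp only [hcov]
  rw [Finset.sum_sub_distrib, Finset.sum_ite_eq_mul, ← measureReal_eq_sum_inter_fiber hyhat hyk]
  ring

/-- **per-class decomposition.** Under symmetric label noise with
error rate `e ∈ [0,1)` and positive class masses, for every measurable labeler `ŷ`
and every class `k`,
`μ({ŷ=r}∩{y=k}) = a·μ({ŷ=k}∩{y=k}) + b·μ({y=k}) + ∑ₗ [co-labeling terms]`,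
where `a = (1−e) − e/(K−1)` and `b = e/(K−1)`. -/
theorem per_class_decomposition
    {Ω : Type*} [MeasurableSpace Ω] {K : ℕ} (hK : 2 ≤ K)
    (e : ℝ) (he0 : 0 ≤ e) (he1 : e < 1)
    (μ : Measure Ω) [IsProbabilityMeasure μ]
    (y r : Ω → Fin K) (hy : Measurable y) (hr : Measurable r)
    (hnoise_diag : ∀ k : Fin K,
      (μ ({ω | r ω = k} ∩ {ω | y ω = k})).toReal
        = (1 - e) * (μ {ω | y ω = k}).toReal)
    (hnoise_off : ∀ k l : Fin K, l ≠ k →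
      (μ ({ω | r ω = l} ∩ {ω | y ω = k})).toReal
        = e / ((K : ℝ) - 1) * (μ {ω | y ω = k}).toReal)
    (hpos : ∀ k : Fin K, 0 < μ {ω | y ω = k})
    (yhat : Ω → Fin K) (hyhat : Measurable yhat) (k : Fin K) :
    (μ ({ω | yhat ω = r ω} ∩ {ω | y ω = k})).toReal
      = ((1 - e) - e / ((K : ℝ) - 1))
          * (μ ({ω | yhat ω = k} ∩ {ω | y ω = k})).toReal
        + e / ((K : ℝ) - 1) * (μ {ω | y ω = k}).toReal
        + ∑ l : Fin K,
            ((μ ({ω | yhat ω = l} ∩ {ω | r ω = l} ∩ {ω | y ω = k})).toReal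
              - (μ ({ω | yhat ω = l} ∩ {ω | y ω = k})).toReal
                  * (μ ({ω | r ω = l} ∩ {ω | y ω = k})).toReal
                  / (μ {ω | y ω = k}).toReal) :=
  per_class_decomposition_general e μ y r hy hr hnoise_diag hnoise_off yhat hyhat k
end

section
/- (Vanishing co-labeling covariance under conditional independence.) Under symmetric label noise with error rate e and positive class masses, if a measurable LLM labeler ŷ : Ω → Fin K is conditionally independent of the reference r given the ground truth y, i.e. for all classes k, ℓ, ℓ′, μ({ŷ = ℓ} ∩ {r = ℓ′} ∩ {y = k})·μ({y = k}) = μ({ŷ = ℓ} ∩ {y = k})·μ({r = ℓ′} ∩ {y = k}), then the co-labeling covariance vanishes, J(ŷ) = 0, and consequently the decomposition reduces to the linear form A_R(ŷ) = a·A_T(ŷ) + b with a = (1−e) − e/(K−1) and b = e/(K−1). -/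
open MeasureTheory

/-! Conditional independence at `ℓ = ℓ'` says that each summand of `J` vanishes, and it factors
`μ({ŷ = ℓ} ∩ {r = ℓ} ∩ {y = k})` as `μ({ŷ = ℓ} ∩ {y = k}) · μ(r = ℓ | y = k)`. Under symmetric
noise the second factor is `1 - e` on the diagonal and `e/(K-1)` off it, so summing over `ℓ` and
`k` gives `A_R = (1 - e - e/(K-1)) · ∑ₖ μ({ŷ = k} ∩ {y = k}) + e/(K-1) · ∑ₖ μ(y = k)`. -/

open Finset

theorem sum_sum_mul_ite_eq {ι R : Type*} [Fintype ι] [DecidableEq ι] [CommRing R]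
    {Q : ι → ι → R} {P : ι → R} (hrow : ∀ k, ∑ l, Q k l = P k) (htot : ∑ k, P k = 1)
    (α β : R) :
    ∑ k, ∑ l, Q k l * (if l = k then α else β) = (α - β) * ∑ k, Q k k + β := by
  have hsplit : ∀ k l, Q k l * (if l = k then α else β)
      = β * Q k l + if l = k then (α - β) * Q k l else 0 := by
    intro k l
    split_ifs <;> ring
  simp only [hsplit, sum_add_distrib, ← mul_sum, hrow, sum_ite_eq', mem_univ, if_true, htot]
  ring

namespace MeasureTheory

theorem measureReal_eq_sum_preimage_singleton_inter {Ω ι : Type*} [MeasurableSpace Ω]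
    [Fintype ι] [MeasurableSpace ι] [MeasurableSingletonClass ι] (μ : Measure Ω)
    [IsFiniteMeasure μ] {f : Ω → ι} (hf : Measurable f) (s : Set Ω) :
    μ.real s = ∑ i, μ.real (f ⁻¹' {i} ∩ s) := by
  rw [← measureReal_restrict_apply_univ, ← Set.preimage_univ (f := f), ← coe_univ,
    ← sum_measureReal_preimage_singleton _ fun i _ => hf (measurableSet_singleton i)]
  exact sum_congr rfl fun i _ => measureReal_restrict_apply (hf (measurableSet_singleton i))

variable {Ω : Type*} [MeasurableSpace Ω] {K : ℕ} (μ : Measure Ω) [IsFiniteMeasure μ]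
  {y r yhat : Ω → Fin K}

theorem trueAgree_eq_sum (hy : Measurable y) :
    trueAgree μ y yhat = ∑ k, μ.real ({ω | yhat ω = k} ∩ {ω | y ω = k}) := by
  rw [trueAgree, ← measureReal_def, measureReal_eq_sum_preimage_singleton_inter μ hy]
  refine sum_congr rfl fun k _ => congrArg μ.real ?_
  ext ω
  simp only [Set.mem_inter_iff, Set.mem_preimage, Set.mem_singleton_iff, Set.mem_ofPred_eq]
  grind

theorem refAgree_eq_sum_sum (hy : Measurable y) (hr : Measurable r) :
    refAgree μ r yhat
      = ∑ k, ∑ l, μ.real ({ω | yhat ω = l} ∩ {ω | r ω = l} ∩ {ω | y ω = k}) := by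
  rw [refAgree, ← measureReal_def, measureReal_eq_sum_preimage_singleton_inter μ hy]
  refine sum_congr rfl fun k _ => ?_
  rw [measureReal_eq_sum_preimage_singleton_inter μ hr]
  refine sum_congr rfl fun l _ => congrArg μ.real ?_
  ext ω
  simp only [Set.mem_inter_iff, Set.mem_preimage, Set.mem_singleton_iff, Set.mem_ofPred_eq]
  grind

end MeasureTheory

open MeasureTheory

theorem coLabelCov_eq_zero_of_condIndep_general
    {Ω : Type*} [MeasurableSpace Ω] {K : ℕ}
    (e : ℝ)
    (μ : Measure Ω) [IsProbabilityMeasure μ]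
    (y r : Ω → Fin K) (hy : Measurable y) (hr : Measurable r)
    (hnoise_diag : ∀ k : Fin K,
      (μ ({ω | r ω = k} ∩ {ω | y ω = k})).toReal
        = (1 - e) * (μ {ω | y ω = k}).toReal)
    (hnoise_off : ∀ k l : Fin K, l ≠ k →
      (μ ({ω | r ω = l} ∩ {ω | y ω = k})).toReal
        = e / ((K : ℝ) - 1) * (μ {ω | y ω = k}).toReal)
    (hpos : ∀ k : Fin K, 0 < μ {ω | y ω = k})
    (yhat : Ω → Fin K) (hyhat : Measurable yhat)
    (hindep : ∀ k l l' : Fin K,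
      (μ ({ω | yhat ω = l} ∩ {ω | r ω = l'} ∩ {ω | y ω = k})).toReal
          * (μ {ω | y ω = k}).toReal
        = (μ ({ω | yhat ω = l} ∩ {ω | y ω = k})).toReal
            * (μ ({ω | r ω = l'} ∩ {ω | y ω = k})).toReal) :
    coLabelCov μ y r yhat = 0 ∧
    refAgree μ r yhat
      = ((1 - e) - e / ((K : ℝ) - 1)) * trueAgree μ y yhat
        + e / ((K : ℝ) - 1) := by
  simp only [← measureReal_def] at hnoise_diag hnoise_off hindep ⊢
  have hP : ∀ k, μ.real {ω | y ω = k} ≠ 0 := fun k =>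
    (ENNReal.toReal_pos (hpos k).ne' (measure_ne_top μ _)).ne'
  have hfactor : ∀ k l, μ.real ({ω | yhat ω = l} ∩ {ω | r ω = l} ∩ {ω | y ω = k})
      = μ.real ({ω | yhat ω = l} ∩ {ω | y ω = k})
        * μ.real ({ω | r ω = l} ∩ {ω | y ω = k}) / μ.real {ω | y ω = k} := fun k l => by
    rw [eq_div_iff (hP k), hindep]
  refine ⟨?_, ?_⟩
  · simp only [coLabelCov, ← measureReal_def, hfactor, sub_self, sum_const_zero]
  have hnoise : ∀ k l, μ.real ({ω | r ω = l} ∩ {ω | y ω = k}) / μ.real {ω | y ω = k}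
      = if l = k then 1 - e else e / ((K : ℝ) - 1) := by
    intro k l
    split_ifs with hlk
    · subst hlk
      rw [hnoise_diag, mul_div_cancel_right₀ _ (hP l)]
    · rw [hnoise_off k l hlk, mul_div_cancel_right₀ _ (hP k)]
  rw [refAgree_eq_sum_sum μ hy hr, trueAgree_eq_sum μ hy]
  simp only [hfactor, mul_div_assoc, hnoise]
  refine sum_sum_mul_ite_eq (P := fun k => μ.real {ω | y ω = k}) (fun k => ?_) ?_ _ _
  · exact (measureReal_eq_sum_preimage_singleton_inter μ hyhat _).symm
  · rw [← probReal_univ (μ := μ), measureReal_eq_sum_preimage_singleton_inter μ hy]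
    simp only [Set.inter_univ]
    rfl

/-- **vanishing co-labeling covariance under conditional
independence.** Under symmetric label noise with error rate `e ∈ [0,1)` and
positive class masses, if `ŷ` is conditionally independent of `r` given `y`
(i.e. `μ({ŷ=ℓ}∩{r=ℓ'}∩{y=k})·μ({y=k}) = μ({ŷ=ℓ}∩{y=k})·μ({r=ℓ'}∩{y=k})` for all
`k, ℓ, ℓ'`), then `J(ŷ) = 0` and `A_R(ŷ) = a·A_T(ŷ) + b` with
`a = (1−e) − e/(K−1)` and `b = e/(K−1)`. -/
theorem coLabelCov_eq_zero_of_condIndep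
    {Ω : Type*} [MeasurableSpace Ω] {K : ℕ} (hK : 2 ≤ K)
    (e : ℝ) (he0 : 0 ≤ e) (he1 : e < 1)
    (μ : Measure Ω) [IsProbabilityMeasure μ]
    (y r : Ω → Fin K) (hy : Measurable y) (hr : Measurable r)
    (hnoise_diag : ∀ k : Fin K,
      (μ ({ω | r ω = k} ∩ {ω | y ω = k})).toReal
        = (1 - e) * (μ {ω | y ω = k}).toReal)
    (hnoise_off : ∀ k l : Fin K, l ≠ k →
      (μ ({ω | r ω = l} ∩ {ω | y ω = k})).toReal
        = e / ((K : ℝ) - 1) * (μ {ω | y ω = k}).toReal)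
    (hpos : ∀ k : Fin K, 0 < μ {ω | y ω = k})
    (yhat : Ω → Fin K) (hyhat : Measurable yhat)
    (hindep : ∀ k l l' : Fin K,
      (μ ({ω | yhat ω = l} ∩ {ω | r ω = l'} ∩ {ω | y ω = k})).toReal
          * (μ {ω | y ω = k}).toReal
        = (μ ({ω | yhat ω = l} ∩ {ω | y ω = k})).toReal
            * (μ ({ω | r ω = l'} ∩ {ω | y ω = k})).toReal) :
    coLabelCov μ y r yhat = 0 ∧
    refAgree μ r yhat
      = ((1 - e) - e / ((K : ℝ) - 1)) * trueAgree μ y yhat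
        + e / ((K : ℝ) - 1) :=
  coLabelCov_eq_zero_of_condIndep_general e μ y r hy hr hnoise_diag hnoise_off hpos yhat hyhat
    hindep
end
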